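/- arXiv:2003.13072 — 2 statements merged into one kernel-verified Lean document; each statement's English description precedes it below -/
import Mathlib

section
/- For the noncentral chi-square distribution function F_k(x, λ²) with k degrees of freedom and noncentrality parameter λ², we have |F_k(x, λ₁²) - F_k(x, λ₂²)| ≤ 2 (sup_{y∈ℝ} φ(y)) |λ₁ - λ₂| for all x ∈ ℝ and λ₁, λ₂ ≥ 0, where φ is the standard normal density. -/
open MeasureTheory ProbabilityTheory Real

lemma gaussPDF_le_aux (y : ℝ) : gaussianPDFReal 0 1 y ≤ (Real.sqrt (2 * π))⁻¹ := by
  unfold gaussianPDFReal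
  norm_num
  exact mul_le_of_le_one_right (by positivity)
    (by rw [Real.exp_le_one_iff]; nlinarith [sq_nonneg y])

lemma gauss_Icc_le_aux (a b : ℝ) :
    gaussianReal 0 1 (Set.Icc a b) ≤ ENNReal.ofReal ((b - a) * (Real.sqrt (2 * π))⁻¹) := by
  rcases le_or_gt a b with hab | hab
  · rw [gaussianReal_apply 0 one_ne_zero]
    calc ∫⁻ y in Set.Icc a b, gaussianPDF 0 1 y
        ≤ ∫⁻ _ in Set.Icc a b, ENNReal.ofReal ((Real.sqrt (2 * π))⁻¹) :=
          lintegral_mono fun y => ENNReal.ofReal_le_ofReal (gaussPDF_le_aux y)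
      _ = ENNReal.ofReal ((Real.sqrt (2 * π))⁻¹) * volume (Set.Icc a b) := setLIntegral_const _ _
      _ = ENNReal.ofReal ((b - a) * (Real.sqrt (2 * π))⁻¹) := by
          rw [Real.volume_Icc, ← ENNReal.ofReal_mul (by positivity), mul_comm]
  · simp [Set.Icc_eq_empty hab.not_ge]

lemma quad_set_eq_aux (t lam : ℝ) (ht : 0 ≤ t) :
    {a : ℝ | (a + lam) ^ 2 ≤ t} = Set.Icc (-lam - Real.sqrt t) (-lam + Real.sqrt t) := by
  ext a
  rw [Set.mem_Icc, Set.mem_setOf_eq]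
  constructor
  · intro h
    constructor <;>
      nlinarith [Real.sq_sqrt ht, Real.sqrt_nonneg t, sq_nonneg (a + lam + Real.sqrt t),
        sq_nonneg (a + lam - Real.sqrt t)]
  · rintro ⟨h1, h2⟩
    nlinarith [Real.sq_sqrt ht, Real.sqrt_nonneg t]

lemma oneDim_aux (t lam₁ lam₂ : ℝ) (h : lam₁ ≤ lam₂) :
    gaussianReal 0 1 {a : ℝ | (a + lam₁) ^ 2 ≤ t} ≤
      gaussianReal 0 1 {a : ℝ | (a + lam₂) ^ 2 ≤ t} +
        ENNReal.ofReal ((lam₂ - lam₁) * (Real.sqrt (2 * π))⁻¹) := by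
  rcases lt_or_ge t 0 with ht | ht
  · have he : {a : ℝ | (a + lam₁) ^ 2 ≤ t} = ∅ := by
      ext a
      simp only [Set.mem_setOf_eq, Set.mem_empty_iff_false, iff_false, not_le]
      nlinarith [sq_nonneg (a + lam₁)]
    simp [he]
  · set s := Real.sqrt t
    have hsub : {a : ℝ | (a + lam₁) ^ 2 ≤ t} ⊆
        {a : ℝ | (a + lam₂) ^ 2 ≤ t} ∪ Set.Icc (-lam₂ + s) (-lam₁ + s) := by
      rw [quad_set_eq_aux t lam₁ ht, quad_set_eq_aux t lam₂ ht]
      intro a ha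
      rw [Set.mem_Icc] at ha
      by_cases hc : a ≤ -lam₂ + s
      · exact Or.inl (Set.mem_Icc.mpr ⟨by linarith [ha.1], hc⟩)
      · exact Or.inr (Set.mem_Icc.mpr ⟨by linarith, ha.2⟩)
    calc gaussianReal 0 1 {a : ℝ | (a + lam₁) ^ 2 ≤ t}
        ≤ gaussianReal 0 1 ({a : ℝ | (a + lam₂) ^ 2 ≤ t} ∪ Set.Icc (-lam₂ + s) (-lam₁ + s)) :=
          measure_mono hsub
      _ ≤ gaussianReal 0 1 {a : ℝ | (a + lam₂) ^ 2 ≤ t} +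
            gaussianReal 0 1 (Set.Icc (-lam₂ + s) (-lam₁ + s)) := measure_union_le _ _
      _ ≤ _ := by
          refine add_le_add_right (le_trans (gauss_Icc_le_aux _ _) ?_) _
          apply le_of_eq
          congr 1
          ring

lemma oneDim'_aux (t lam₁ lam₂ : ℝ) (h : lam₁ ≤ lam₂) :
    gaussianReal 0 1 {a : ℝ | (a + lam₂) ^ 2 ≤ t} ≤
      gaussianReal 0 1 {a : ℝ | (a + lam₁) ^ 2 ≤ t} +
        ENNReal.ofReal ((lam₂ - lam₁) * (Real.sqrt (2 * π))⁻¹) := by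
  rcases lt_or_ge t 0 with ht | ht
  · have he : {a : ℝ | (a + lam₂) ^ 2 ≤ t} = ∅ := by
      ext a
      simp only [Set.mem_setOf_eq, Set.mem_empty_iff_false, iff_false, not_le]
      nlinarith [sq_nonneg (a + lam₂)]
    simp [he]
  · set s := Real.sqrt t
    have hsub : {a : ℝ | (a + lam₂) ^ 2 ≤ t} ⊆
        {a : ℝ | (a + lam₁) ^ 2 ≤ t} ∪ Set.Icc (-lam₂ - s) (-lam₁ - s) := by
      rw [quad_set_eq_aux t lam₁ ht, quad_set_eq_aux t lam₂ ht]
      intro a ha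
      rw [Set.mem_Icc] at ha
      by_cases hc : -lam₁ - s ≤ a
      · exact Or.inl (Set.mem_Icc.mpr ⟨hc, by linarith [ha.2]⟩)
      · exact Or.inr (Set.mem_Icc.mpr ⟨ha.1, by linarith⟩)
    calc gaussianReal 0 1 {a : ℝ | (a + lam₂) ^ 2 ≤ t}
        ≤ gaussianReal 0 1 ({a : ℝ | (a + lam₁) ^ 2 ≤ t} ∪ Set.Icc (-lam₂ - s) (-lam₁ - s)) :=
          measure_mono hsub
      _ ≤ gaussianReal 0 1 {a : ℝ | (a + lam₁) ^ 2 ≤ t} +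
            gaussianReal 0 1 (Set.Icc (-lam₂ - s) (-lam₁ - s)) := measure_union_le _ _
      _ ≤ _ := by
          refine add_le_add_right (le_trans (gauss_Icc_le_aux _ _) ?_) _
          apply le_of_eq
          congr 1
          ring

lemma liftDim_aux (k : ℕ) (x lam₁ lam₂ : ℝ) (C : ENNReal)
    (hpt : ∀ t : ℝ, gaussianReal 0 1 {a : ℝ | (a + lam₁) ^ 2 ≤ t} ≤
      gaussianReal 0 1 {a : ℝ | (a + lam₂) ^ 2 ≤ t} + C) :
    (Measure.pi fun _ : Fin k => gaussianReal 0 1)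
        {z | (∑ i, (z i + lam₁ * (if (i : ℕ) = 0 then 1 else 0)) ^ 2) ≤ x} ≤
      (Measure.pi fun _ : Fin k => gaussianReal 0 1)
        {z | (∑ i, (z i + lam₂ * (if (i : ℕ) = 0 then 1 else 0)) ^ 2) ≤ x} + C := by
  match k with
  | 0 =>
    simp only [Finset.univ_eq_empty, Finset.sum_empty]
    exact le_self_add
  | n + 1 =>
    set ν := Measure.pi fun _ : Fin n => gaussianReal 0 1 with hν
    have hmeasT : ∀ lam : ℝ, MeasurableSet
        {p : ℝ × (Fin n → ℝ) | (p.1 + lam) ^ 2 + ∑ j, (p.2 j) ^ 2 ≤ x} := by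
      intro lam
      apply measurableSet_le _ measurable_const
      fun_prop
    have hmp := measurePreserving_piFinSuccAbove (fun _ : Fin (n + 1) => gaussianReal 0 1) 0
    have hpre : ∀ lam : ℝ,
        {z : Fin (n + 1) → ℝ | (∑ i, (z i + lam * (if (i : ℕ) = 0 then 1 else 0)) ^ 2) ≤ x} =
          MeasurableEquiv.piFinSuccAbove (fun _ : Fin (n + 1) => ℝ) 0 ⁻¹'
            {p : ℝ × (Fin n → ℝ) | (p.1 + lam) ^ 2 + ∑ j, (p.2 j) ^ 2 ≤ x} := by
      intro lam
      ext z
      simp only [Set.mem_preimage, Set.mem_setOf_eq, MeasurableEquiv.piFinSuccAbove_apply]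
      rw [Fin.sum_univ_succAbove (fun i => (z i + lam * (if (i : ℕ) = 0 then 1 else 0)) ^ 2) 0]
      simp [Fin.succAbove, Fin.tail]
    have happ : ∀ lam : ℝ,
        (Measure.pi fun _ : Fin (n + 1) => gaussianReal 0 1)
          {z | (∑ i, (z i + lam * (if (i : ℕ) = 0 then 1 else 0)) ^ 2) ≤ x} =
        ((gaussianReal 0 1).prod ν)
          {p : ℝ × (Fin n → ℝ) | (p.1 + lam) ^ 2 + ∑ j, (p.2 j) ^ 2 ≤ x} := by
      intro lam
      rw [hpre lam, hmp.measure_preimage (hmeasT lam).nullMeasurableSet]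
    have hsec : ∀ (lam : ℝ) (b : Fin n → ℝ),
        ((fun a => (a, b)) ⁻¹' {p : ℝ × (Fin n → ℝ) | (p.1 + lam) ^ 2 + ∑ j, (p.2 j) ^ 2 ≤ x}) =
          {a : ℝ | (a + lam) ^ 2 ≤ x - ∑ j, (b j) ^ 2} := by
      intro lam b
      ext a
      simp only [Set.mem_preimage, Set.mem_setOf_eq]
      constructor <;> intro <;> linarith
    rw [happ lam₁, happ lam₂, Measure.prod_apply_symm (hmeasT lam₁),
      Measure.prod_apply_symm (hmeasT lam₂)]
    calc (∫⁻ b, gaussianReal 0 1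
            ((fun a => (a, b)) ⁻¹' {p : ℝ × (Fin n → ℝ) | (p.1 + lam₁) ^ 2 + ∑ j, (p.2 j) ^ 2 ≤ x}) ∂ν)
        ≤ ∫⁻ b, (gaussianReal 0 1
            ((fun a => (a, b)) ⁻¹' {p : ℝ × (Fin n → ℝ) | (p.1 + lam₂) ^ 2 + ∑ j, (p.2 j) ^ 2 ≤ x}) + C) ∂ν := by
          refine lintegral_mono fun b => ?_
          rw [hsec lam₁ b, hsec lam₂ b]
          exact hpt _
      _ = (∫⁻ b, gaussianReal 0 1
            ((fun a => (a, b)) ⁻¹' {p : ℝ × (Fin n → ℝ) | (p.1 + lam₂) ^ 2 + ∑ j, (p.2 j) ^ 2 ≤ x}) ∂ν) + C := by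
          rw [lintegral_add_right _ measurable_const, lintegral_const, measure_univ, mul_one]

lemma sup_gauss_aux :
    (⨆ y : ℝ, Real.exp (-(y ^ 2) / 2) / Real.sqrt (2 * π)) = (Real.sqrt (2 * π))⁻¹ := by
  have key : ∀ y : ℝ, Real.exp (-(y ^ 2) / 2) / Real.sqrt (2 * π) ≤ (Real.sqrt (2 * π))⁻¹ := by
    intro y
    rw [div_le_iff₀ (by positivity), inv_mul_cancel₀ (by positivity), Real.exp_le_one_iff]
    nlinarith [sq_nonneg y]
  have hbdd : BddAbove (Set.range fun y : ℝ => Real.exp (-(y ^ 2) / 2) / Real.sqrt (2 * π)) := by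
    refine ⟨(Real.sqrt (2 * π))⁻¹, ?_⟩
    rintro v ⟨y, rfl⟩
    exact key y
  apply le_antisymm
  · exact ciSup_le key
  · have h0 := le_ciSup (f := fun y : ℝ => Real.exp (-(y ^ 2) / 2) / Real.sqrt (2 * π)) hbdd 0
    simpa using h0

/-- The noncentral chi-square CDF with `k` degrees of freedom and noncentrality `λ²`:
`F_k(x, λ²) = P(|Z + λ e₁|² ≤ x)` with `Z` a standard Gaussian vector in `ℝ^k`. -/
noncomputable def noncentralChiSqCDF (k : ℕ) (lam x : ℝ) : ℝ :=
  ((Measure.pi fun _ : Fin k => gaussianReal 0 1)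
    {z | (∑ i, (z i + lam * (if (i : ℕ) = 0 then 1 else 0)) ^ 2) ≤ x}).toReal

lemma noncentralChiSq_lipschitz_aux (k : ℕ) (x lam₁ lam₂ : ℝ) (h : lam₁ ≤ lam₂) :
    |noncentralChiSqCDF k lam₁ x - noncentralChiSqCDF k lam₂ x| ≤
      2 * (Real.sqrt (2 * π))⁻¹ * |lam₁ - lam₂| := by
  set c : ℝ := (Real.sqrt (2 * π))⁻¹ with hc
  have hc0 : 0 ≤ c := by positivity
  set C := ENNReal.ofReal ((lam₂ - lam₁) * c) with hC
  have h₁ := liftDim_aux k x lam₁ lam₂ C (fun t => oneDim_aux t lam₁ lam₂ h)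
  have h₂ := liftDim_aux k x lam₂ lam₁ C (fun t => oneDim'_aux t lam₁ lam₂ h)
  set A := (Measure.pi fun _ : Fin k => gaussianReal 0 1)
      {z | (∑ i, (z i + lam₁ * (if (i : ℕ) = 0 then 1 else 0)) ^ 2) ≤ x} with hA
  set B := (Measure.pi fun _ : Fin k => gaussianReal 0 1)
      {z | (∑ i, (z i + lam₂ * (if (i : ℕ) = 0 then 1 else 0)) ^ 2) ≤ x} with hB
  have hAt : A ≠ ⊤ := measure_ne_top _ _
  have hBt : B ≠ ⊤ := measure_ne_top _ _
  have hCt : C ≠ ⊤ := ENNReal.ofReal_ne_top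
  have habs : |lam₁ - lam₂| = lam₂ - lam₁ := by
    rw [abs_of_nonpos (by linarith)]; ring
  have hFA : noncentralChiSqCDF k lam₁ x = A.toReal := rfl
  have hFB : noncentralChiSqCDF k lam₂ x = B.toReal := rfl
  have hCr : C.toReal = (lam₂ - lam₁) * c := ENNReal.toReal_ofReal (by nlinarith)
  have hineq1 : A.toReal ≤ B.toReal + C.toReal := by
    have := ENNReal.toReal_mono (ENNReal.add_ne_top.mpr ⟨hBt, hCt⟩) h₁
    rwa [ENNReal.toReal_add hBt hCt] at this
  have hineq2 : B.toReal ≤ A.toReal + C.toReal := by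
    have := ENNReal.toReal_mono (ENNReal.add_ne_top.mpr ⟨hAt, hCt⟩) h₂
    rwa [ENNReal.toReal_add hAt hCt] at this
  rw [hFA, hFB, habs, abs_sub_le_iff]
  constructor <;> nlinarith

/-- Lipschitz continuity of the noncentral chi-square CDF in the
noncentrality: `|F_k(x, λ₁²) - F_k(x, λ₂²)| ≤ 2 (sup_y φ(y)) |λ₁ - λ₂|`,
where `φ` is the standard normal density. -/
theorem noncentralChiSq_lipschitz (k : ℕ) (x lam₁ lam₂ : ℝ)
    (h₁ : 0 ≤ lam₁) (h₂ : 0 ≤ lam₂) :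
    |noncentralChiSqCDF k lam₁ x - noncentralChiSqCDF k lam₂ x| ≤
      2 * (⨆ y : ℝ, Real.exp (-(y ^ 2) / 2) / Real.sqrt (2 * π)) * |lam₁ - lam₂| := by
  rw [sup_gauss_aux]
  rcases le_total lam₁ lam₂ with h | h
  · exact noncentralChiSq_lipschitz_aux k x lam₁ lam₂ h
  · rw [abs_sub_comm (noncentralChiSqCDF k lam₁ x), abs_sub_comm lam₁ lam₂]
    exact noncentralChiSq_lipschitz_aux k x lam₂ lam₁ h
end

section
/- The noncentral chi-square distribution function is nonincreasing in its noncentrality: for fixed x and k, if 0 ≤ λ₁ ≤ λ₂, then F_k(x, λ₂²) ≤ F_k(x, λ₁²). -/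
open MeasureTheory ProbabilityTheory
open scoped NNReal Real

lemma gaussPDF_anti {s t : ℝ} (h : t ^ 2 ≤ s ^ 2) :
    gaussianPDFReal 0 1 s ≤ gaussianPDFReal 0 1 t := by
  unfold gaussianPDFReal
  have key : -(s - 0) ^ 2 / (2 * ((1 : ℝ≥0) : ℝ)) ≤ -(t - 0) ^ 2 / (2 * ((1 : ℝ≥0) : ℝ)) := by
    push_cast
    nlinarith
  exact mul_le_mul_of_nonneg_left (Real.exp_le_exp.2 key) (by positivity)

lemma gauss_intervalIntegrable (a b : ℝ) :
    IntervalIntegrable (gaussianPDFReal 0 1) volume a b :=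
  (integrable_gaussianPDFReal 0 1).intervalIntegrable

lemma gauss_interval_shift {u v d : ℝ} (huv : u ≤ v) (hc : u + v ≤ 0) (hd : 0 ≤ d) :
    (∫ t in (u - d)..(v - d), gaussianPDFReal 0 1 t)
      ≤ ∫ t in u..v, gaussianPDFReal 0 1 t := by
  set φ := gaussianPDFReal 0 1
  have key : (∫ t in (u - d)..u, φ t) ≤ ∫ t in (v - d)..v, φ t := by
    have e1 : v - d - (v - u) = u - d := by ring
    have e2 : v - (v - u) = u := by ring
    have hsub : (∫ t in (v - d)..v, φ (t - (v - u))) = ∫ t in (u - d)..u, φ t := by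
      rw [intervalIntegral.integral_comp_sub_right φ (v - u), e1, e2]
    have hint : IntervalIntegrable (fun t => φ (t - (v - u))) volume (v - d) v := by
      have h := (gauss_intervalIntegrable (u - d) u).comp_sub_right (v - u)
      have e3 : u - d + (v - u) = v - d := by ring
      have e4 : u + (v - u) = v := by ring
      rwa [e3, e4] at h
    rw [← hsub]
    refine intervalIntegral.integral_mono_on (f := fun t => φ (t - (v - u))) (g := φ)
      (by linarith) hint (gauss_intervalIntegrable _ _) fun t ht => ?_
    exact gaussPDF_anti (by nlinarith [ht.2])
  have h1 : (∫ t in (u - d)..(v - d), φ t) + ∫ t in (v - d)..v, φ t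
      = ∫ t in (u - d)..v, φ t :=
    intervalIntegral.integral_add_adjacent_intervals (gauss_intervalIntegrable _ _)
      (gauss_intervalIntegrable _ _)
  have h2 : (∫ t in (u - d)..u, φ t) + ∫ t in u..v, φ t = ∫ t in (u - d)..v, φ t :=
    intervalIntegral.integral_add_adjacent_intervals (gauss_intervalIntegrable _ _)
      (gauss_intervalIntegrable _ _)
  linarith

lemma gauss_Icc_mono {u v d : ℝ} (huv : u ≤ v) (hc : u + v ≤ 0) (hd : 0 ≤ d) :
    gaussianReal 0 1 (Set.Icc (u - d) (v - d)) ≤ gaussianReal 0 1 (Set.Icc u v) := by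
  rw [gaussianReal_apply_eq_integral _ one_ne_zero,
    gaussianReal_apply_eq_integral _ one_ne_zero]
  apply ENNReal.ofReal_le_ofReal
  have e1 : ∀ a b : ℝ, a ≤ b → (∫ t in Set.Icc a b, gaussianPDFReal 0 1 t)
      = ∫ t in a..b, gaussianPDFReal 0 1 t := by
    intro a b hab
    rw [MeasureTheory.integral_Icc_eq_integral_Ioc, intervalIntegral.integral_of_le hab]
  rw [e1 _ _ (by linarith), e1 _ _ huv]
  exact gauss_interval_shift huv hc hd

lemma oneDim (c lam₁ lam₂ : ℝ) (h₁ : 0 ≤ lam₁) (h₁₂ : lam₁ ≤ lam₂) :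
    gaussianReal 0 1 {z | (z + lam₂) ^ 2 ≤ c} ≤ gaussianReal 0 1 {z | (z + lam₁) ^ 2 ≤ c} := by
  rcases lt_or_ge c 0 with hc | hc
  · have : {z : ℝ | (z + lam₂) ^ 2 ≤ c} = ∅ := by
      ext z; simp only [Set.mem_setOf_eq, Set.mem_empty_iff_false, iff_false]
      nlinarith [sq_nonneg (z + lam₂)]
    simp [this]
  · have hset : ∀ lam : ℝ, {z : ℝ | (z + lam) ^ 2 ≤ c}
        = Set.Icc (-Real.sqrt c - lam) (Real.sqrt c - lam) := by
      intro lam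
      ext z
      simp only [Set.mem_setOf_eq, Set.mem_Icc]
      constructor
      · intro h
        have := Real.abs_le_sqrt h
        rw [abs_le] at this
        constructor <;> linarith [this.1, this.2]
      · intro ⟨ha, hb⟩
        have : (z + lam) ^ 2 ≤ Real.sqrt c ^ 2 := sq_le_sq' (by linarith) (by linarith)
        rwa [Real.sq_sqrt hc] at this
    rw [hset, hset]
    have h := gauss_Icc_mono (u := -Real.sqrt c - lam₁) (v := Real.sqrt c - lam₁)
      (d := lam₂ - lam₁) (by nlinarith [Real.sqrt_nonneg c]) (by linarith) (by linarith)
    convert h using 3 <;> ring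

/-- The noncentral chi-square CDF is nonincreasing in the noncentrality:
`0 ≤ λ₁ ≤ λ₂` implies `F_k(x, λ₂²) ≤ F_k(x, λ₁²)`. -/
theorem noncentralChiSq_antitone (k : ℕ) (x lam₁ lam₂ : ℝ)
    (h₁ : 0 ≤ lam₁) (h₁₂ : lam₁ ≤ lam₂) :
    noncentralChiSqCDF k lam₂ x ≤ noncentralChiSqCDF k lam₁ x := by
  unfold noncentralChiSqCDF
  match k with
  | 0 =>
    simp
  | n + 1 =>
    have hμ : IsProbabilityMeasure (Measure.pi fun _ : Fin (n + 1) => gaussianReal 0 1) :=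
      inferInstance
    apply ENNReal.toReal_mono (measure_ne_top _ _)
    -- rewrite the set via the measurable equivalence
    set e := MeasurableEquiv.piFinSuccAbove (fun _ : Fin (n + 1) => ℝ) 0 with he
    have hmp := measurePreserving_piFinSuccAbove (fun _ : Fin (n + 1) => gaussianReal 0 1) 0
    have hT : ∀ lam : ℝ, MeasurableSet {p : ℝ × (Fin n → ℝ) |
        (p.1 + lam) ^ 2 + ∑ j, (p.2 j) ^ 2 ≤ x} := by
      intro lam
      apply measurableSet_le _ measurable_const
      fun_prop
    have hS : ∀ lam : ℝ,
        {z : Fin (n + 1) → ℝ | (∑ i, (z i + lam * (if (i : ℕ) = 0 then 1 else 0)) ^ 2) ≤ x}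
          = e ⁻¹' {p : ℝ × (Fin n → ℝ) | (p.1 + lam) ^ 2 + ∑ j, (p.2 j) ^ 2 ≤ x} := by
      intro lam
      ext z
      simp only [Set.mem_preimage, Set.mem_setOf_eq, he,
        MeasurableEquiv.piFinSuccAbove_apply, Fin.insertNthEquiv, Equiv.coe_fn_symm_mk]
      rw [Fin.sum_univ_succ]
      simp [Fin.succAbove, Fin.removeNth, Fin.succ_ne_zero, Fin.val_zero,
        Fin.ext_iff]
    have happ : ∀ lam : ℝ,
        (Measure.pi fun _ : Fin (n + 1) => gaussianReal 0 1)
          {z | (∑ i, (z i + lam * (if (i : ℕ) = 0 then 1 else 0)) ^ 2) ≤ x}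
          = ∫⁻ w, gaussianReal 0 1 {y | (y + lam) ^ 2 ≤ x - ∑ j, (w j) ^ 2}
              ∂(Measure.pi fun _ : Fin n => gaussianReal 0 1) := by
      intro lam
      rw [hS lam, hmp.measure_preimage (hT lam).nullMeasurableSet,
        Measure.prod_apply_symm (hT lam)]
      congr 1
      ext w
      congr 1
      ext y
      simp only [Set.mem_preimage, Set.mem_setOf_eq]
      constructor <;> intro h <;> linarith
    rw [happ, happ]
    exact lintegral_mono fun w => oneDim _ _ _ h₁ h₁₂
end
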